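/- For each t ∈ ℂ, the bracket defined on the span of {e_i : i ≥ 1} by [e₁, e_j]²_t = (j−1)e_{j+1} + t j e_j for j ≠ 1, and [e_i, e_j]²_t = (j−i)e_{i+j} when i ≠ 1 and j ≠ 1 (extended antisymmetrically), satisfies the Jacobi identity. -/

import Mathlib

/-!
Write `f` for the coefficient of `e₁` and `D` for the degree derivation `D e_j = j e_j`. Then
`[x, y]²_t = [x, y] + t (f(x) D(y) - f(y) D(x))`, where `[·,·]` is the bracket of `L₁`.
Such a deformation of any Lie bracket by a derivation `D` and a functional `f` that kills all
brackets and satisfies `f ∘ D = f` is again a Lie bracket: deformed brackets are still killed by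
`f`, so in the Jacobi sum the terms of order `t` cancel because `D` is a derivation and those of
order `t²` cancel by antisymmetry.
-/

/-- Structure constants of the second deformation of `L₁`:
`[e₁, e_j]²_t = (j−1) e_{j+1} + t j e_j` for `j ≠ 1`, `[e_i, e_j]²_t = (j−i) e_{i+j}` for
`i ≠ 1, j ≠ 1`, extended antisymmetrically (and `[e₁,e₁] = 0`). -/
noncomputable def c12 (t : ℂ) (i j : ℕ+) : ℕ+ →₀ ℂ :=
  if i = 1 ∧ j = 1 then 0
  else if i = 1 then
    (((j : ℕ) : ℂ) - 1) • Finsupp.single (j + 1) (1 : ℂ)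
      + (t * ((j : ℕ) : ℂ)) • Finsupp.single j (1 : ℂ)
  else if j = 1 then
    -((((i : ℕ) : ℂ) - 1) • Finsupp.single (i + 1) (1 : ℂ)
      + (t * ((i : ℕ) : ℂ)) • Finsupp.single i (1 : ℂ))
  else (((j : ℕ) : ℂ) - ((i : ℕ) : ℂ)) • Finsupp.single (i + j) (1 : ℂ)

/-- The bilinear extension of `c12`. -/
noncomputable def L1br2 (t : ℂ) : (ℕ+ →₀ ℂ) →ₗ[ℂ] (ℕ+ →₀ ℂ) →ₗ[ℂ] (ℕ+ →₀ ℂ) :=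
  Finsupp.lsum ℂ fun i => LinearMap.toSpanSingleton ℂ _
    (Finsupp.lsum ℂ fun j => LinearMap.toSpanSingleton ℂ _ (c12 t i j))

def jacobiator {R L : Type*} [CommSemiring R] [AddCommMonoid L] [Module R L]
    (B : L →ₗ[R] L →ₗ[R] L) (x y z : L) : L :=
  B (B x y) z + B (B y z) x + B (B z x) y

section Deformation

variable {R L : Type*} [CommRing R] [AddCommGroup L] [Module R L]

def deformBracket (B : L →ₗ[R] L →ₗ[R] L) (f : L →ₗ[R] R) (D : L →ₗ[R] L) (t : R) :
    L →ₗ[R] L →ₗ[R] L :=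
  B + t • ((LinearMap.lsmul R L).compl₁₂ f D - ((LinearMap.lsmul R L).compl₁₂ f D).flip)

@[simp]
theorem deformBracket_apply (B : L →ₗ[R] L →ₗ[R] L) (f : L →ₗ[R] R) (D : L →ₗ[R] L) (t : R)
    (x y : L) : deformBracket B f D t x y = B x y + t • (f x • D y - f y • D x) := by
  simp [deformBracket]

theorem jacobiator_deformBracket {B : L →ₗ[R] L →ₗ[R] L} {f : L →ₗ[R] R} {D : L →ₗ[R] L}
    (hB_skew : ∀ x y, B x y = -B y x) (hB : ∀ x y z, jacobiator B x y z = 0)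
    (hf : ∀ x y, f (B x y) = 0) (hD : ∀ x y, D (B x y) = B (D x) y + B x (D y))
    (hfD : ∀ x, f (D x) = f x) (t : R) (x y z : L) :
    jacobiator (deformBracket B f D t) x y z = 0 := by
  have hf' : ∀ x y, f (deformBracket B f D t x y) = 0 := fun x y => by
    simp [hf, hfD, mul_comm]
  have nested : ∀ x y z, deformBracket B f D t (deformBracket B f D t x y) z
      = B (B x y) z + t • (f x • B (D y) z - f y • B (D x) z)
        - t • f z • (B (D x) y - B (D y) x) - (t * t) • f z • (f x • D (D y) - f y • D (D x)) := by
    intro x y z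
    rw [deformBracket_apply _ _ _ _ (deformBracket B f D t x y), hf', deformBracket_apply]
    simp only [map_add, map_sub, map_smul, LinearMap.add_apply, LinearMap.sub_apply,
      LinearMap.smul_apply, hD, hB_skew x (D y)]
    module
  have hBxyz := hB x y z
  rw [jacobiator] at hBxyz ⊢
  rw [nested, nested, nested]
  linear_combination (norm := module) hBxyz

end Deformation

theorem Finsupp.jacobiator_eq_zero_of_single {ι R : Type*} [CommSemiring R]
    {B : (ι →₀ R) →ₗ[R] (ι →₀ R) →ₗ[R] (ι →₀ R)}
    (h : ∀ i j k, jacobiator B (single i 1) (single j 1) (single k 1) = 0) (x y z : ι →₀ R) :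
    jacobiator B x y z = 0 := by
  have linear_left : ∀ y z, (∀ i, jacobiator B (single i 1) y z = 0) →
      ∀ x, jacobiator B x y z = 0 := by
    intro y z hyz x
    -- `jacobiator B · y z` as a linear map
    have : (B.flip z) ∘ₗ (B.flip y) + B (B y z) + (B.flip y) ∘ₗ (B z) = 0 := by
      refine Finsupp.lhom_ext' fun i => LinearMap.ext_ring ?_
      simpa [jacobiator] using hyz i
    simpa [jacobiator] using LinearMap.congr_fun this x
  have rotate : ∀ x y z, jacobiator B x y z = jacobiator B y z x := fun x y z => by
    simp only [jacobiator]; abel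
  refine linear_left y z (fun i => ?_) x
  rw [rotate]
  refine linear_left z _ (fun j => ?_) y
  rw [rotate]
  exact linear_left _ _ (fun k => h k i j) z

theorem PNat.add_ne_one (i j : ℕ+) : i + j ≠ 1 :=
  (one_le.trans_lt (PNat.lt_add_right i j)).ne'

theorem L1br2_single_single (t : ℂ) (i j : ℕ+) :
    L1br2 t (Finsupp.single i 1) (Finsupp.single j 1) = c12 t i j := by
  simp [L1br2]

theorem c12_skew (t : ℂ) (i j : ℕ+) : c12 t i j = -c12 t j i := by
  unfold c12
  by_cases hi : i = 1 <;> by_cases hj : j = 1 <;> simp [hi, hj, add_comm]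

theorem L1br2_skew (t : ℂ) (x y : ℕ+ →₀ ℂ) : L1br2 t x y = -L1br2 t y x := by
  suffices L1br2 t + (L1br2 t).flip = 0 from
    eq_neg_of_add_eq_zero_left (LinearMap.congr_fun₂ this x y)
  ext i j
  simp [L1br2_single_single, c12_skew t i j]

theorem L1br2_zero_single_single (i j : ℕ+) :
    L1br2 0 (Finsupp.single i 1) (Finsupp.single j 1)
      = (((j : ℕ) : ℂ) - (i : ℕ)) • Finsupp.single (i + j) 1 := by
  rw [L1br2_single_single, c12]
  by_cases hi : i = 1 <;> by_cases hj : j = 1 <;> simp [hi, hj, add_comm]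

theorem L1br2_zero_jacobiator (x y z : ℕ+ →₀ ℂ) : jacobiator (L1br2 0) x y z = 0 := by
  refine Finsupp.jacobiator_eq_zero_of_single (fun i j k => ?_) x y z
  simp only [jacobiator, L1br2_zero_single_single, map_smul, LinearMap.smul_apply]
  rw [show j + k + i = i + j + k by ac_rfl, show k + i + j = i + j + k by ac_rfl]
  push_cast
  module

noncomputable def degreeDerivation : (ℕ+ →₀ ℂ) →ₗ[ℂ] (ℕ+ →₀ ℂ) :=
  Finsupp.linearCombination ℂ fun j : ℕ+ => ((j : ℕ) : ℂ) • Finsupp.single j 1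

@[simp]
theorem degreeDerivation_single (j : ℕ+) :
    degreeDerivation (Finsupp.single j 1) = ((j : ℕ) : ℂ) • Finsupp.single j 1 := by
  simp [degreeDerivation]

theorem L1br2_zero_apply_one (x y : ℕ+ →₀ ℂ) : L1br2 0 x y 1 = 0 := by
  suffices (L1br2 0).compr₂ (Finsupp.lapply 1) = 0 from LinearMap.congr_fun₂ this x y
  ext i j
  simp [L1br2_zero_single_single, PNat.add_ne_one]

theorem degreeDerivation_apply_one (x : ℕ+ →₀ ℂ) : degreeDerivation x 1 = x 1 := by
  suffices Finsupp.lapply 1 ∘ₗ degreeDerivation = Finsupp.lapply 1 from LinearMap.congr_fun this x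
  ext j
  by_cases hj : j = 1 <;> simp [hj]

theorem degreeDerivation_L1br2_zero (x y : ℕ+ →₀ ℂ) :
    degreeDerivation (L1br2 0 x y)
      = L1br2 0 (degreeDerivation x) y + L1br2 0 x (degreeDerivation y) := by
  suffices (L1br2 0).compr₂ degreeDerivation
      = (L1br2 0) ∘ₗ degreeDerivation + (L1br2 0).compl₂ degreeDerivation from
    LinearMap.congr_fun₂ this x y
  ext i j : 4
  simp only [LinearMap.compr₂_apply, LinearMap.add_apply, LinearMap.comp_apply,
    LinearMap.compl₂_apply, Finsupp.lsingle_apply, L1br2_zero_single_single, map_smul,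
    degreeDerivation_single, LinearMap.smul_apply, smul_smul]
  push_cast
  module

theorem L1br2_eq_deformBracket (t : ℂ) :
    L1br2 t = deformBracket (L1br2 0) (Finsupp.lapply 1) degreeDerivation t := by
  ext i j : 4
  simp only [LinearMap.coe_comp, Function.comp_apply, Finsupp.lsingle_apply, deformBracket_apply,
    L1br2_single_single, Finsupp.lapply_apply, Finsupp.single_apply, degreeDerivation_single]
  unfold c12
  by_cases hi : i = 1 <;> by_cases hj : j = 1 <;> simp [hi, hj, add_comm]

theorem L1br2_jacobiator (t : ℂ) (x y z : ℕ+ →₀ ℂ) : jacobiator (L1br2 t) x y z = 0 := by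
  rw [L1br2_eq_deformBracket]
  exact jacobiator_deformBracket (L1br2_skew 0) L1br2_zero_jacobiator L1br2_zero_apply_one
    degreeDerivation_L1br2_zero degreeDerivation_apply_one t x y z

/-- for each `t ∈ ℂ` the bracket `[·,·]²_t` (modifying the `L₁` bracket only
when one index equals `1`) is skew-symmetric and satisfies the Jacobi identity. -/
theorem stmt_12 (t : ℂ) :
    (∀ j : ℕ+, j ≠ 1 → L1br2 t (Finsupp.single 1 1) (Finsupp.single j 1) =
      (((j : ℕ) : ℂ) - 1) • Finsupp.single (j + 1) (1 : ℂ)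
        + (t * ((j : ℕ) : ℂ)) • Finsupp.single j (1 : ℂ)) ∧
    (∀ i j : ℕ+, i ≠ 1 → j ≠ 1 → L1br2 t (Finsupp.single i 1) (Finsupp.single j 1) =
      (((j : ℕ) : ℂ) - ((i : ℕ) : ℂ)) • Finsupp.single (i + j) (1 : ℂ)) ∧
    (∀ x y : ℕ+ →₀ ℂ, L1br2 t x y = -L1br2 t y x) ∧
    (∀ x y z : ℕ+ →₀ ℂ,
      L1br2 t (L1br2 t x y) z + L1br2 t (L1br2 t y z) x + L1br2 t (L1br2 t z x) y = 0) := by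
  refine ⟨fun j hj => ?_, fun i j hi hj => ?_, L1br2_skew t, L1br2_jacobiator t⟩
  · simp [L1br2_single_single, c12, hj]
  · simp [L1br2_single_single, c12, hi, hj]
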